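/- arXiv:0804.4618 — 4 statements merged into one kernel-verified Lean document; each statement's English description precedes it below -/
import Mathlib

section
/- (Mandelstam–Tamm differential inequality, pure case.) Let h be self-adjoint on a finite-dimensional Hilbert space and φ a unit vector with P_φ(t) = |⟨φ, e^{−iht}φ⟩|². Then for all t ∈ ℝ, |P′_φ(t)| ≤ 2 (Δh)_φ √(P_φ(t)(1 − P_φ(t))). -/
open scoped InnerProductSpace
open Complex Filter Asymptotics

noncomputable section

variable {H : Type*} [NormedAddCommGroup H] [InnerProductSpace ℂ H] [FiniteDimensional ℂ H]

/-- |φ⟩⟨ψ| -/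
def ketbra (φ ψ : H) : H →L[ℂ] H := (innerSL ℂ ψ).smulRight φ

def tr (A : H →L[ℂ] H) : ℂ := LinearMap.trace ℂ H A.toLinearMap

/-- e^{-iht} -/
def timeEv (h : H →L[ℂ] H) (t : ℝ) : H →L[ℂ] H :=
  NormedSpace.exp ((-(Complex.I * (t : ℂ))) • h)

def expVec (h : H →L[ℂ] H) (φ : H) : ℝ := (⟪φ, h φ⟫_ℂ).re
def varVec (h : H →L[ℂ] H) (φ : H) : ℝ := (⟪φ, h (h φ)⟫_ℂ).re - (expVec h φ) ^ 2
def expMix (h ρ : H →L[ℂ] H) : ℝ := (tr (h ∘L ρ)).re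
def varMix (h ρ : H →L[ℂ] H) : ℝ := (tr (h ∘L h ∘L ρ)).re - (expMix h ρ) ^ 2
def survP (h : H →L[ℂ] H) (φ : H) (t : ℝ) : ℝ := ‖⟪φ, timeEv h t φ⟫_ℂ‖ ^ 2
def survPMix (h ρ Pr : H →L[ℂ] H) (t : ℝ) : ℝ :=
  (tr (Pr ∘L timeEv h t ∘L ρ ∘L timeEv h (-t))).re

/-!
Write ψ = e^{-iht}φ and a = ⟪φ, ψ⟫, so that P = |a|² and P' = 2 Im(ā ⟪hφ, ψ⟫). Split
hφ = ⟪φ, hφ⟫ φ + u and ψ = a φ + χ with u, χ ⊥ φ. Since ⟪φ, hφ⟫ is real, the φ-components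
contribute the real number ⟪φ, hφ⟫ |a|², hence P' = 2 Im(ā ⟪u, χ⟫), and Cauchy–Schwarz gives
|P'| ≤ 2 ‖u‖ |a| ‖χ‖, where ‖u‖ = (Δh)_φ and, by unitarity, ‖χ‖² = 1 - |a|².
-/

open ComplexConjugate

section Projection

variable {V : Type*} [NormedAddCommGroup V] [InnerProductSpace ℂ V]

lemma inner_sub_inner_smul_eq_zero {φ : V} (hφ : ‖φ‖ = 1) (ψ : V) :
    ⟪φ, ψ - ⟪φ, ψ⟫_ℂ • φ⟫_ℂ = 0 := by
  rw [inner_sub_right, inner_smul_right, inner_self_eq_norm_sq_to_K, hφ]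
  simp

lemma norm_sub_inner_smul_sq {φ : V} (hφ : ‖φ‖ = 1) (ψ : V) :
    ‖ψ - ⟪φ, ψ⟫_ℂ • φ‖ ^ 2 = ‖ψ‖ ^ 2 - ‖⟪φ, ψ⟫_ℂ‖ ^ 2 := by
  have hpyth := norm_add_sq_eq_norm_sq_add_norm_sq_of_inner_eq_zero (𝕜 := ℂ)
    (ψ - ⟪φ, ψ⟫_ℂ • φ) (⟪φ, ψ⟫_ℂ • φ) (by
      rw [inner_smul_right, inner_eq_zero_symm.mp (inner_sub_inner_smul_eq_zero hφ ψ), mul_zero])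
  rw [sub_add_cancel, norm_smul, hφ, mul_one] at hpyth
  linarith

lemma inner_eq_inner_sub_inner_smul_add {φ : V} (hφ : ‖φ‖ = 1) (w ψ : V) :
    ⟪w, ψ⟫_ℂ = ⟪w - ⟪φ, w⟫_ℂ • φ, ψ - ⟪φ, ψ⟫_ℂ • φ⟫_ℂ + conj ⟪φ, w⟫_ℂ * ⟪φ, ψ⟫_ℂ := by
  rw [inner_sub_left, inner_sub_right, inner_sub_right, inner_smul_left, inner_smul_left,
    inner_smul_right, inner_smul_right, inner_self_eq_norm_sq_to_K, hφ, ← inner_conj_symm w φ]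
  push_cast
  ring

lemma abs_im_conj_inner_mul_inner_le {φ w : V} (hφ : ‖φ‖ = 1) (hw : (⟪φ, w⟫_ℂ).im = 0)
    (ψ : V) : |(conj ⟪φ, ψ⟫_ℂ * ⟪w, ψ⟫_ℂ).im|
      ≤ ‖w - ⟪φ, w⟫_ℂ • φ‖ * (‖⟪φ, ψ⟫_ℂ‖ * ‖ψ - ⟪φ, ψ⟫_ℂ • φ‖) := by
  set a := ⟪φ, ψ⟫_ℂ
  set u := w - ⟪φ, w⟫_ℂ • φ
  set χ := ψ - a • φ
  have hreal : (conj a * (conj ⟪φ, w⟫_ℂ * a)).im = 0 := by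
    rw [mul_left_comm, ← Complex.normSq_eq_conj_mul_self, Complex.im_mul_ofReal,
      Complex.conj_im, hw, neg_zero, zero_mul]
  calc |(conj a * ⟪w, ψ⟫_ℂ).im|
      = |(conj a * ⟪u, χ⟫_ℂ).im| := by
        rw [inner_eq_inner_sub_inner_smul_add hφ w ψ, mul_add, Complex.add_im, hreal, add_zero]
    _ ≤ ‖conj a * ⟪u, χ⟫_ℂ‖ := Complex.abs_im_le_norm _
    _ = ‖a‖ * ‖⟪u, χ⟫_ℂ‖ := by rw [norm_mul, Complex.norm_conj]
    _ ≤ ‖a‖ * (‖u‖ * ‖χ‖) := by gcongr; exact norm_inner_le_norm _ _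
    _ = ‖u‖ * (‖a‖ * ‖χ‖) := by ring

end Projection

lemma varVec_eq_norm_sub_inner_smul_sq {h : H →L[ℂ] H} (hsa : IsSelfAdjoint h) {φ : H}
    (hφ : ‖φ‖ = 1) : varVec h φ = ‖h φ - ⟪φ, h φ⟫_ℂ • φ‖ ^ 2 := by
  have him : (⟪φ, h φ⟫_ℂ).im = 0 := hsa.isSymmetric.im_inner_self_apply φ
  rw [norm_sub_inner_smul_sq hφ, varVec, expVec, @norm_sq_eq_re_inner ℂ,
    ← ContinuousLinearMap.adjoint_inner_right, hsa.adjoint_eq, Complex.sq_norm,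
    Complex.normSq_apply, him, mul_zero, add_zero, sq]
  rfl

lemma timeEv_mem_unitary {h : H →L[ℂ] H} (hsa : IsSelfAdjoint h) (t : ℝ) :
    timeEv h t ∈ unitary (H →L[ℂ] H) := by
  let +nondep : NormedAlgebra ℚ (H →L[ℂ] H) := .restrictScalars ℚ ℂ _
  refine NormedSpace.exp_mem_unitary_of_mem_skewAdjoint (hsa.smul_mem_skewAdjoint ?_)
  simp [skewAdjoint.mem_iff]

lemma hasDerivAt_timeEv (h : H →L[ℂ] H) (t : ℝ) :
    HasDerivAt (timeEv h) ((-I) • h * timeEv h t) t := by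
  have hsmul : ∀ s : ℝ, (-(I * (s : ℂ))) • h = s • ((-I) • h) := by
    intro s; rw [← smul_assoc, Complex.real_smul]; congr 1; ring
  change HasDerivAt (fun s : ℝ => NormedSpace.exp ((-(I * (s : ℂ))) • h)) _ t
  simp only [timeEv, hsmul]
  exact hasDerivAt_exp_smul_const' (𝕂 := ℝ) (𝔸 := H →L[ℂ] H) _ _

lemma hasDerivAt_survP (h : H →L[ℂ] H) (φ : H) (t : ℝ) :
    HasDerivAt (survP h φ) (2 * (conj ⟪φ, timeEv h t φ⟫_ℂ * ⟪φ, h (timeEv h t φ)⟫_ℂ).im) t := by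
  have hψ : HasDerivAt (fun s => timeEv h s φ) (((-I) • h * timeEv h t) φ) t :=
    ((ContinuousLinearMap.apply ℂ H φ).restrictScalars ℝ).hasFDerivAt.comp_hasDerivAt t
      (hasDerivAt_timeEv h t)
  refine ((hasDerivAt_const t φ).inner ℂ hψ).norm_sq.congr_deriv ?_
  simp [inner_smul_right, Complex.inner, Complex.mul_re, Complex.mul_im]
  ring

theorem stmt7 (h : H →L[ℂ] H) (hsa : IsSelfAdjoint h) (φ : H) (hφ : ‖φ‖ = 1) :
    ∀ t : ℝ, |deriv (survP h φ) t|
      ≤ 2 * Real.sqrt (varVec h φ) * Real.sqrt (survP h φ t * (1 - survP h φ t)) := by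
  intro t
  set ψ := timeEv h t φ
  have hψ : ‖ψ‖ = 1 := by
    rw [ContinuousLinearMap.norm_map_of_mem_unitary (timeEv_mem_unitary hsa t), hφ]
  have hP : 1 - survP h φ t = ‖ψ - ⟪φ, ψ⟫_ℂ • φ‖ ^ 2 := by
    rw [norm_sub_inner_smul_sq hφ, hψ, one_pow]; rfl
  have hE : (⟪φ, h φ⟫_ℂ).im = 0 := hsa.isSymmetric.im_inner_self_apply φ
  rw [(hasDerivAt_survP h φ t).deriv, ← ContinuousLinearMap.adjoint_inner_left h ψ φ,
    hsa.adjoint_eq, varVec_eq_norm_sub_inner_smul_sq hsa hφ, hP, survP, ← mul_pow,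
    Real.sqrt_sq (by positivity), Real.sqrt_sq (by positivity), abs_mul, abs_two, mul_assoc]
  gcongr
  exact abs_im_conj_inner_mul_inner_le hφ hE ψ
end
end

section
/- (Fleming's bound, pure case.) Let h be self-adjoint on a finite-dimensional Hilbert space and φ a unit vector. Then P_φ(t) = |⟨φ, e^{−iht}φ⟩|² ≥ cos²((Δh)_φ t) for all real t with (Δh)_φ |t| ≤ π/2. -/
/-!
Diagonalise `h` in an orthonormal eigenbasis `bᵢ` with eigenvalues `μᵢ`. The survival amplitude
`⟨φ, e^{-iht} φ⟩` is then the characteristic function `∑ pᵢ e^{-iμᵢt}` of the spectral weights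
`pᵢ = |⟨bᵢ, φ⟩|²`, a probability distribution with mean `⟨h⟩_φ` and variance `(Δh)_φ²`. After
rotating by the phase `e^{i⟨h⟩t}` its real part is `∑ pᵢ cos xᵢ` with `xᵢ = (μᵢ - ⟨h⟩)t` and
`∑ pᵢ xᵢ² = a²`, `a = (Δh)_φ |t|`. For `0 < a ≤ π/2` the even parabola
`x ↦ cos a + sin a / (2a) · (a² - x²)` lies below `cos`, so averaging gives
`|amplitude| ≥ ∑ pᵢ cos xᵢ ≥ cos a ≥ 0`.
-/

open scoped InnerProductSpace
open Complex Filter Asymptotics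

noncomputable section

variable {H : Type*} [NormedAddCommGroup H] [InnerProductSpace ℂ H] [FiniteDimensional ℂ H]

namespace Real

open Set

theorem sin_div_le_sin_div {x y : ℝ} (hx : 0 < x) (hxy : x ≤ y) (hy : y ≤ π) :
    sin y / y ≤ sin x / x := by
  have hslope := strictConcaveOn_sin_Icc.concaveOn.slope_anti (x := 0) ⟨le_rfl, pi_pos.le⟩
  have := hslope ⟨⟨hx.le, hxy.trans hy⟩, hx.ne'⟩ ⟨⟨hx.le.trans hxy, hy⟩, (hx.trans_le hxy).ne'⟩ hxy
  simpa [slope_def_field] using this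

theorem sin_div_mul_le_sin {a y : ℝ} (ha : a ≤ π) (hy : 0 ≤ y) (hya : y ≤ a) :
    sin a / a * y ≤ sin y := by
  rcases hy.eq_or_lt with rfl | hy
  · simp
  · rw [← le_div_iff₀ hy]
    exact sin_div_le_sin_div hy hya ha

theorem sin_le_sin_div_mul {a y : ℝ} (ha : 0 < a) (ha' : a ≤ π / 2) (hay : a ≤ y) :
    sin y ≤ sin a / a * y := by
  have hy := ha.trans_le hay
  rcases le_total y (π / 2) with hyπ | hyπ
  · rw [← div_le_iff₀ hy]
    exact sin_div_le_sin_div ha hay (hyπ.trans (by linarith [pi_pos]))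
  · have hjordan : 2 / π ≤ sin a / a := by
      rw [le_div_iff₀ ha]; exact mul_le_sin ha.le ha'
    calc sin y ≤ 1 := sin_le_one y
      _ = 2 / π * (π / 2) := by field_simp
      _ ≤ sin a / a * y :=
        mul_le_mul hjordan hyπ (by positivity) (hjordan.trans' (by positivity))

/-- The coefficient `sin a / (2 * a)` makes the parabola tangent to `cos` at `±a`. -/
theorem cos_add_mul_sq_sub_sq_le_cos {a : ℝ} (ha : 0 < a) (ha' : a ≤ π / 2) (x : ℝ) :
    cos a + sin a / (2 * a) * (a ^ 2 - x ^ 2) ≤ cos x := by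
  set c := sin a / (2 * a)
  set f : ℝ → ℝ := fun y => cos y + c * y ^ 2
  have hderiv : ∀ y, HasDerivAt f (-sin y + sin a / a * y) y := fun y => by
    refine ((hasDerivAt_cos y).add ((hasDerivAt_pow 2 y).const_mul c)).congr_deriv ?_
    simp only [c]; field_simp; ring
  have hcont : Continuous f := continuous_iff_continuousAt.2 fun y => (hderiv y).continuousAt
  have hdiff : ∀ s : Set ℝ, DifferentiableOn ℝ f s := fun _ y _ =>
    (hderiv y).differentiableAt.differentiableWithinAt
  have hanti : AntitoneOn f (Icc 0 a) := by
    refine antitoneOn_of_deriv_nonpos (convex_Icc 0 a) hcont.continuousOn (hdiff _) fun y hy => ?_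
    rw [interior_Icc] at hy
    rw [(hderiv y).deriv]
    linarith [sin_div_mul_le_sin (ha'.trans (by linarith [pi_pos])) hy.1.le hy.2.le]
  have hmono : MonotoneOn f (Ici a) := by
    refine monotoneOn_of_deriv_nonneg (convex_Ici a) hcont.continuousOn (hdiff _) fun y hy => ?_
    rw [interior_Ici] at hy
    rw [(hderiv y).deriv]
    linarith [sin_le_sin_div_mul ha ha' hy.le]
  have hmin : f a ≤ f |x| := by
    rcases le_total |x| a with hxa | hxa
    · exact hanti ⟨abs_nonneg x, hxa⟩ ⟨ha.le, le_rfl⟩ hxa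
    · exact hmono self_mem_Ici hxa hxa
  simp only [f, cos_abs, sq_abs] at hmin
  linarith

theorem exists_forall_cos_add_mul_sq_sub_sq_le_cos {a : ℝ} (ha : 0 ≤ a) (ha' : a ≤ π / 2) :
    ∃ c : ℝ, ∀ x, cos a + c * (a ^ 2 - x ^ 2) ≤ cos x := by
  rcases ha.eq_or_lt with rfl | ha
  · exact ⟨1 / 2, fun x => by linarith [one_sub_sq_div_two_le_cos (x := x), cos_zero]⟩
  · exact ⟨_, cos_add_mul_sq_sub_sq_le_cos ha ha'⟩

theorem cos_le_sum_mul_cos {ι : Type*} (s : Finset ι) {p x : ι → ℝ} (hp : ∀ i ∈ s, 0 ≤ p i)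
    (hps : ∑ i ∈ s, p i = 1) {a : ℝ} (ha : 0 ≤ a) (ha' : a ≤ π / 2)
    (hx : ∑ i ∈ s, p i * x i ^ 2 = a ^ 2) :
    cos a ≤ ∑ i ∈ s, p i * cos (x i) := by
  obtain ⟨c, hc⟩ := exists_forall_cos_add_mul_sq_sub_sq_le_cos ha ha'
  calc cos a = ∑ i ∈ s, p i * (cos a + c * (a ^ 2 - x i ^ 2)) := by
        simp only [mul_add, mul_sub, Finset.sum_add_distrib, Finset.sum_sub_distrib,
          ← Finset.sum_mul, mul_left_comm (p _) c, ← Finset.mul_sum, hps, hx]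
        ring
    _ ≤ ∑ i ∈ s, p i * cos (x i) :=
        Finset.sum_le_sum fun i hi => mul_le_mul_of_nonneg_left (hc (x i)) (hp i hi)

end Real

theorem Finset.sum_mul_sub_sum_mul_sq {ι : Type*} (s : Finset ι) {p : ι → ℝ}
    (hps : ∑ i ∈ s, p i = 1) (μ : ι → ℝ) :
    ∑ i ∈ s, p i * (μ i - ∑ j ∈ s, p j * μ j) ^ 2 =
      ∑ i ∈ s, p i * μ i ^ 2 - (∑ i ∈ s, p i * μ i) ^ 2 := by
  have hexpand : ∀ m, ∑ i ∈ s, p i * (μ i - m) ^ 2 =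
      ∑ i ∈ s, p i * μ i ^ 2 - 2 * m * ∑ i ∈ s, p i * μ i + m ^ 2 * ∑ i ∈ s, p i := fun m => by
    simp only [Finset.mul_sum, ← Finset.sum_sub_distrib, ← Finset.sum_add_distrib]
    exact Finset.sum_congr rfl fun i _ => by ring
  rw [hexpand, hps]
  ring

theorem cos_sq_le_norm_sum_mul_exp_sq {ι : Type*} (s : Finset ι) {p : ι → ℝ}
    (hp : ∀ i ∈ s, 0 ≤ p i) (hps : ∑ i ∈ s, p i = 1) (μ : ι → ℝ) (m t : ℝ)
    (ht : √(∑ i ∈ s, p i * (μ i - m) ^ 2) * |t| ≤ Real.pi / 2) :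
    Real.cos (√(∑ i ∈ s, p i * (μ i - m) ^ 2) * t) ^ 2 ≤
      ‖∑ i ∈ s, (p i : ℂ) * Complex.exp (-(I * t) * μ i)‖ ^ 2 := by
  set σ := √(∑ i ∈ s, p i * (μ i - m) ^ 2)
  set z := ∑ i ∈ s, (p i : ℂ) * Complex.exp (-(I * t) * μ i)
  have hσt : 0 ≤ σ * |t| := by positivity
  have hmoment : ∑ i ∈ s, p i * ((μ i - m) * t) ^ 2 = (σ * |t|) ^ 2 := by
    rw [mul_pow, Real.sq_sqrt (Finset.sum_nonneg fun i hi => by have := hp i hi; positivity),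
      sq_abs, Finset.sum_mul]
    exact Finset.sum_congr rfl fun i _ => by ring
  have hre : (Complex.exp (I * m * t) * z).re = ∑ i ∈ s, p i * Real.cos ((μ i - m) * t) := by
    simp only [z, Finset.mul_sum, Complex.re_sum]
    refine Finset.sum_congr rfl fun i _ => ?_
    rw [mul_left_comm, ← Complex.exp_add,
      show I * m * t + -(I * t) * μ i = ((-((μ i - m) * t) : ℝ) : ℂ) * I by push_cast; ring,
      Complex.re_ofReal_mul, Complex.exp_ofReal_mul_I_re, Real.cos_neg]
  have hcos : Real.cos (σ * |t|) ≤ ‖z‖ :=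
    calc Real.cos (σ * |t|) ≤ ∑ i ∈ s, p i * Real.cos ((μ i - m) * t) :=
          Real.cos_le_sum_mul_cos s hp hps hσt ht hmoment
      _ = (Complex.exp (I * m * t) * z).re := hre.symm
      _ ≤ ‖Complex.exp (I * m * t) * z‖ := Complex.re_le_norm _
      _ = ‖z‖ := by rw [norm_mul, Complex.norm_exp]; simp
  rw [← Real.cos_abs, abs_mul, abs_of_nonneg (Real.sqrt_nonneg _)]
  exact pow_le_pow_left₀ (Real.cos_nonneg_of_mem_Icc ⟨by linarith [Real.pi_pos], ht⟩) hcos 2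

section OrthonormalBasis

variable {𝕜 E ι : Type*} [RCLike 𝕜] [NormedAddCommGroup E] [InnerProductSpace 𝕜 E] [Fintype ι]

theorem NormedSpace.exp_apply_of_apply_eq_smul [CompleteSpace E] (A : E →L[𝕜] E) {c : 𝕜} {v : E}
    (hv : A v = c • v) : NormedSpace.exp A v = NormedSpace.exp c • v := by
  have hpow : ∀ k : ℕ, (A ^ k) v = c ^ k • v := fun k => by
    induction k with
    | zero => simp
    | succ k ih => rw [pow_succ, mul_apply_eq_comp, hv, map_smul, ih, smul_smul, pow_succ']
  have hA := (NormedSpace.exp_series_hasSum_exp' (𝕂 := 𝕜) A).mapL (ContinuousLinearMap.apply 𝕜 E v)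
  have hc := (NormedSpace.exp_series_hasSum_exp' (𝕂 := 𝕜) c).smul_const v
  simp only [ContinuousLinearMap.apply_apply, smul_apply, hpow, smul_smul,
    smul_eq_mul] at hA hc
  exact hA.unique hc

theorem OrthonormalBasis.sum_sq_norm_repr (b : OrthonormalBasis ι 𝕜 E) (x : E) :
    ∑ i, ‖b.repr x i‖ ^ 2 = ‖x‖ ^ 2 := by
  simp only [b.repr_apply_apply, b.sum_sq_norm_inner_right]

theorem OrthonormalBasis.inner_apply_eq_sum (b : OrthonormalBasis ι 𝕜 E) (A : E →L[𝕜] E)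
    {g : ι → 𝕜} (hA : ∀ i, A (b i) = g i • b i) (φ : E) :
    ⟪φ, A φ⟫_𝕜 = ∑ i, ((‖b.repr φ i‖ ^ 2 : ℝ) : 𝕜) * g i := by
  nth_rewrite 2 [← b.sum_repr φ]
  simp only [map_sum, map_smul, hA, smul_smul, inner_sum, inner_smul_right]
  refine Finset.sum_congr rfl fun i _ => ?_
  rw [b.repr_apply_apply, ← inner_conj_symm φ, mul_right_comm, RCLike.mul_conj, RCLike.ofReal_pow]

end OrthonormalBasis

section Spectral

variable {E ι : Type*} [NormedAddCommGroup E] [InnerProductSpace ℂ E] [Fintype ι]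
  {h : E →L[ℂ] E} (b : OrthonormalBasis ι ℂ E) {μ : ι → ℝ}

theorem expVec_eq_sum (hb : ∀ i, h (b i) = (μ i : ℂ) • b i) (φ : E) :
    expVec h φ = ∑ i, ‖b.repr φ i‖ ^ 2 * μ i := by
  rw [expVec, b.inner_apply_eq_sum h hb, Complex.re_sum]
  simp only [RCLike.ofReal_eq_complex_ofReal, Complex.re_ofReal_mul, Complex.ofReal_re]

theorem re_inner_apply_apply_eq_sum (hb : ∀ i, h (b i) = (μ i : ℂ) • b i) (φ : E) :
    (⟪φ, h (h φ)⟫_ℂ).re = ∑ i, ‖b.repr φ i‖ ^ 2 * μ i ^ 2 := by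
  have hb2 : ∀ i, (h ∘L h) (b i) = ((μ i ^ 2 : ℝ) : ℂ) • b i := fun i => by
    rw [ContinuousLinearMap.comp_apply, hb, map_smul, hb, smul_smul, ← sq, Complex.ofReal_pow]
  rw [← ContinuousLinearMap.comp_apply, b.inner_apply_eq_sum _ hb2, Complex.re_sum]
  simp only [RCLike.ofReal_eq_complex_ofReal, Complex.re_ofReal_mul, Complex.ofReal_re]

theorem varVec_eq_sum (hb : ∀ i, h (b i) = (μ i : ℂ) • b i) {φ : E} (hφ : ‖φ‖ = 1) :
    varVec h φ = ∑ i, ‖b.repr φ i‖ ^ 2 * (μ i - expVec h φ) ^ 2 := by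
  rw [varVec, re_inner_apply_apply_eq_sum b hb φ, expVec_eq_sum b hb φ,
    Finset.sum_mul_sub_sum_mul_sq _ (by rw [b.sum_sq_norm_repr, hφ, one_pow])]

theorem inner_timeEv_eq_sum [FiniteDimensional ℂ E] (hb : ∀ i, h (b i) = (μ i : ℂ) • b i)
    (φ : E) (t : ℝ) :
    ⟪φ, timeEv h t φ⟫_ℂ = ∑ i, ((‖b.repr φ i‖ ^ 2 : ℝ) : ℂ) * Complex.exp (-(I * t) * μ i) := by
  refine b.inner_apply_eq_sum _ (fun i => ?_) φ
  have hv : ((-(I * t)) • h) (b i) = (-(I * t) * μ i) • b i := by rw [smul_apply, hb, smul_smul]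
  rw [timeEv, NormedSpace.exp_apply_of_apply_eq_smul _ hv, Complex.exp_eq_exp_ℂ]

end Spectral

theorem stmt8 (h : H →L[ℂ] H) (hsa : IsSelfAdjoint h) (φ : H) (hφ : ‖φ‖ = 1) :
    ∀ t : ℝ, Real.sqrt (varVec h φ) * |t| ≤ Real.pi / 2 →
      survP h φ t ≥ Real.cos (Real.sqrt (varVec h φ) * t) ^ 2 := by
  intro t ht
  have hsym : (h : H →ₗ[ℂ] H).IsSymmetric := hsa.isSymmetric
  set b := hsym.eigenvectorBasis rfl
  have hb : ∀ i, h (b i) = (hsym.eigenvalues rfl i : ℂ) • b i := hsym.apply_eigenvectorBasis rfl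
  have hweights : ∑ i, ‖b.repr φ i‖ ^ 2 = 1 := by
    rw [b.sum_sq_norm_repr, hφ, one_pow]
  rw [varVec_eq_sum b hb hφ] at ht ⊢
  rw [survP, inner_timeEv_eq_sum b hb]
  exact cos_sq_le_norm_sum_mul_exp_sq _ (fun i _ => sq_nonneg _) hweights _ _ t ht
end
end

section
/- (Dichotomy for pure state decay.) Let h be self-adjoint on a finite-dimensional Hilbert space and φ a unit vector with (Δh)_φ > 0. Then exactly one of the following holds: (i) P_φ(t) > cos²((Δh)_φ t) for all t with 0 < (Δh)_φ |t| ≤ π/2, or (ii) P_φ(t) = cos²((Δh)_φ t) for all t ∈ ℝ. -/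
open scoped InnerProductSpace
open Complex Filter Asymptotics

noncomputable section

variable {H : Type*} [NormedAddCommGroup H] [InnerProductSpace ℂ H] [FiniteDimensional ℂ H]

/-!
In an eigenbasis `b` of `h`, `⟪φ, e^{-iht} φ⟫` is, up to a phase, the characteristic function
`∑ pᵢ e^{-i ωᵢ t}` of the spectral distribution of `h` in `φ` centred at its mean: weights
`pᵢ = ‖⟪bᵢ, φ⟫‖²`, mean `0`, variance `Δ²`. For `s = Δ|t| ∈ (0, π/2]` the even parabola tangent to
`cos` at `±s` lies below `cos` and touches it only there; averaging it against `p` gives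
`∑ pᵢ cos (ωᵢ t) ≥ cos (Δ t) ≥ 0`, hence `P_φ(t) ≥ cos² (Δ t)`. Equality at one such `t` forces
the distribution onto `{±Δ}`, and then `P_φ(t) = cos² (Δ t)` for every `t`.
-/

open Real Set

theorem sin_div_strictAntiOn : StrictAntiOn (fun x => Real.sin x / x) (Ioc 0 π) := by
  intro x hx y hy hxy
  simpa using strictConcaveOn_sin_Icc.secant_strict_mono (a := 0) ⟨le_rfl, pi_pos.le⟩
    (Ioc_subset_Icc_self hx) (Ioc_subset_Icc_self hy) hx.1.ne' hy.1.ne' hxy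

-- Past `π` the bound comes from `sin x ≤ 1` and Jordan's inequality `2 / π ≤ sin s / s`.
theorem sin_div_lt_sin_div_of_lt {s x : ℝ} (hs0 : 0 < s) (hs : s ≤ π / 2) (hsx : s < x) :
    Real.sin x / x < Real.sin s / s := by
  rcases le_or_gt x π with hxπ | hπx
  · exact sin_div_strictAntiOn ⟨hs0, by linarith⟩ ⟨hs0.trans hsx, hxπ⟩ hsx
  · have hx0 : 0 < x := pi_pos.trans hπx
    calc Real.sin x / x ≤ |x|⁻¹ := sin_div_le_inv_abs x
      _ < 2 / π := by
        rw [abs_of_pos hx0, inv_eq_one_div, div_lt_div_iff₀ hx0 pi_pos]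
        linarith [pi_pos]
      _ ≤ Real.sin s / s := by
        rw [le_div_iff₀ hs0]
        exact mul_le_sin hs0.le hs

/-- The even parabola tangent to `cos` at `±s`. -/
def cosTangentParabola (s u : ℝ) : ℝ := Real.cos s - Real.sin s / (2 * s) * (u ^ 2 - s ^ 2)

theorem cosTangentParabola_lt_cos {s u : ℝ} (hs0 : 0 < s) (hs : s ≤ π / 2) (hu : |u| ≠ s) :
    cosTangentParabola s u < Real.cos u := by
  set c := Real.sin s / (2 * s) with hc
  set F : ℝ → ℝ := fun x => Real.cos x + c * x ^ 2
  have hF : Continuous F := by fun_prop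
  have hF' : ∀ x, 0 < x → deriv F x = x * (Real.sin s / s - Real.sin x / x) := by
    intro x hx
    have hderiv : HasDerivAt F (-Real.sin x + c * (2 * x)) x :=
      ((Real.hasDerivAt_cos x).fun_add ((hasDerivAt_pow 2 x).const_mul c)).congr_deriv
        (by norm_num)
    rw [hderiv.deriv, hc]
    field_simp
    ring
  have hanti : StrictAntiOn F (Icc 0 s) := by
    refine strictAntiOn_of_deriv_neg (convex_Icc 0 s) hF.continuousOn fun x hx => ?_
    rw [interior_Icc] at hx
    rw [hF' x hx.1]
    exact mul_neg_of_pos_of_neg hx.1 (sub_neg.2 (sin_div_strictAntiOn ⟨hx.1, by linarith [hx.2]⟩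
      ⟨hs0, by linarith⟩ hx.2))
  have hmono : StrictMonoOn F (Ici s) := by
    refine strictMonoOn_of_deriv_pos (convex_Ici s) hF.continuousOn fun x hx => ?_
    rw [interior_Ici] at hx
    rw [hF' x (hs0.trans hx)]
    exact mul_pos (hs0.trans hx) (sub_pos.2 (sin_div_lt_sin_div_of_lt hs0 hs hx))
  have hFs : F s < F |u| := by
    rcases hu.lt_or_gt with h | h
    · exact hanti ⟨abs_nonneg u, h.le⟩ ⟨hs0.le, le_rfl⟩ h
    · exact hmono (mem_Ici.2 le_rfl) (mem_Ici.2 h.le) h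
  simp only [F, cos_abs, sq_abs] at hFs
  simp only [cosTangentParabola]
  linarith

theorem cosTangentParabola_le_cos {s : ℝ} (hs0 : 0 < s) (hs : s ≤ π / 2) (u : ℝ) :
    cosTangentParabola s u ≤ Real.cos u := by
  rcases eq_or_ne |u| s with hu | hu
  · rw [← cos_abs, hu, cosTangentParabola, ← sq_abs u, hu]
    simp
  · exact (cosTangentParabola_lt_cos hs0 hs hu).le

theorem xor_forall_gt_forall_eq_of_rigid {α : Type*} {T : α → Prop} {f g : α → ℝ}
    (hT : ∃ t, T t) (hle : ∀ t, T t → g t ≤ f t)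
    (hrigid : ∀ t, T t → f t = g t → ∀ t', f t' = g t') :
    Xor (∀ t, T t → f t > g t) (∀ t, f t = g t) := by
  by_cases hall : ∀ t, f t = g t
  · obtain ⟨t, ht⟩ := hT
    exact Or.inr ⟨hall, fun hgt => (hgt t ht).ne' (hall t)⟩
  · exact Or.inl ⟨fun t ht => (hle t ht).lt_of_ne fun h => hall (hrigid t ht h.symm), hall⟩

theorem cos_mul_abs (a t : ℝ) : Real.cos (a * |t|) = Real.cos (a * t) := by
  rcases abs_choice t with h | h <;> simp [h]

section WeightedSums

variable {ι : Type*} [Fintype ι] {p ω : ι → ℝ} {Δ : ℝ}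

theorem sum_mul_cosTangentParabola (hp1 : ∑ i, p i = 1) (hV : ∑ i, p i * ω i ^ 2 = Δ ^ 2)
    (t : ℝ) : ∑ i, p i * cosTangentParabola (Δ * |t|) (ω i * t) = Real.cos (Δ * t) := by
  have hexpand : ∀ i, p i * cosTangentParabola (Δ * |t|) (ω i * t) =
      (Real.cos (Δ * |t|) + Real.sin (Δ * |t|) / (2 * (Δ * |t|)) * (Δ * |t|) ^ 2) * p i -
        Real.sin (Δ * |t|) / (2 * (Δ * |t|)) * t ^ 2 * (p i * ω i ^ 2) := fun i => by
    simp only [cosTangentParabola]; ring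
  simp only [hexpand, Finset.sum_sub_distrib, ← Finset.mul_sum, hp1, hV, mul_pow, sq_abs,
    cos_mul_abs]
  ring

theorem cos_le_sum_mul_cos (hp : ∀ i, 0 ≤ p i) (hp1 : ∑ i, p i = 1)
    (hV : ∑ i, p i * ω i ^ 2 = Δ ^ 2) {t : ℝ} (ht0 : 0 < Δ * |t|) (ht : Δ * |t| ≤ π / 2) :
    Real.cos (Δ * t) ≤ ∑ i, p i * Real.cos (ω i * t) := by
  rw [← sum_mul_cosTangentParabola hp1 hV]
  exact Finset.sum_le_sum fun i _ =>
    mul_le_mul_of_nonneg_left (cosTangentParabola_le_cos ht0 ht _) (hp i)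

theorem abs_eq_of_sum_mul_cos_eq (hp : ∀ i, 0 ≤ p i) (hp1 : ∑ i, p i = 1)
    (hV : ∑ i, p i * ω i ^ 2 = Δ ^ 2) {t : ℝ} (ht0 : 0 < Δ * |t|) (ht : Δ * |t| ≤ π / 2)
    (heq : ∑ i, p i * Real.cos (ω i * t) = Real.cos (Δ * t)) {i : ι} (hi : p i ≠ 0) :
    |ω i| = Δ := by
  rw [← sum_mul_cosTangentParabola hp1 hV, eq_comm, Finset.sum_eq_sum_iff_of_le fun i _ =>
    mul_le_mul_of_nonneg_left (cosTangentParabola_le_cos ht0 ht _) (hp i)] at heq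
  have hparabola := mul_left_cancel₀ hi (heq i (Finset.mem_univ i))
  have htpos : 0 < |t| := (abs_nonneg t).lt_of_ne fun h => by simp [← h] at ht0
  by_contra hne
  refine (cosTangentParabola_lt_cos ht0 ht ?_).ne hparabola
  rw [abs_mul]
  exact fun h => hne (mul_right_cancel₀ htpos.ne' h)

theorem sum_mul_cos_eq_of_abs_eq (hp1 : ∑ i, p i = 1) (hsupp : ∀ i, p i ≠ 0 → |ω i| = Δ)
    (t : ℝ) : ∑ i, p i * Real.cos (ω i * t) = Real.cos (Δ * t) := by
  have hterm : ∀ i, p i * Real.cos (ω i * t) = Real.cos (Δ * t) * p i := fun i => by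
    by_cases hi : p i = 0
    · simp [hi]
    · have hΔi := hsupp i hi
      rcases abs_choice (ω i) with h | h <;> rw [h] at hΔi <;> subst hΔi <;> simp [mul_comm]
  rw [Finset.sum_congr rfl fun i _ => hterm i, ← Finset.mul_sum, hp1, mul_one]

theorem sum_mul_sin_eq_zero_of_abs_eq (hω0 : ∑ i, p i * ω i = 0) (hΔ : Δ ≠ 0)
    (hsupp : ∀ i, p i ≠ 0 → |ω i| = Δ) (t : ℝ) : ∑ i, p i * Real.sin (ω i * t) = 0 := by
  have hterm : ∀ i, p i * Real.sin (ω i * t) = Real.sin (Δ * t) / Δ * (p i * ω i) := fun i => by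
    by_cases hi : p i = 0
    · simp [hi]
    · have hΔi := hsupp i hi
      rcases abs_choice (ω i) with h | h <;> rw [h] at hΔi <;> subst hΔi
      · field_simp
      · field_simp [neg_ne_zero.mp hΔ]
        rw [Real.sin_neg, neg_neg]
  rw [Finset.sum_congr rfl fun i _ => hterm i, ← Finset.mul_sum, hω0, mul_zero]

theorem xor_sum_sq_gt_cos_sq_or_eq (hp : ∀ i, 0 ≤ p i) (hp1 : ∑ i, p i = 1)
    (hω0 : ∑ i, p i * ω i = 0) (hV : ∑ i, p i * ω i ^ 2 = Δ ^ 2) (hΔ : 0 < Δ) :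
    Xor
      (∀ t : ℝ, 0 < Δ * |t| → Δ * |t| ≤ π / 2 →
        (∑ i, p i * Real.cos (ω i * t)) ^ 2 + (∑ i, p i * Real.sin (ω i * t)) ^ 2 >
          Real.cos (Δ * t) ^ 2)
      (∀ t : ℝ, (∑ i, p i * Real.cos (ω i * t)) ^ 2 + (∑ i, p i * Real.sin (ω i * t)) ^ 2 =
          Real.cos (Δ * t) ^ 2) := by
  have hcos_nonneg : ∀ t, Δ * |t| ≤ π / 2 → 0 ≤ Real.cos (Δ * t) := fun t ht => by
    rw [← cos_mul_abs]
    exact cos_nonneg_of_mem_Icc ⟨by linarith [pi_pos, mul_nonneg hΔ.le (abs_nonneg t)], ht⟩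
  rw [← forall_congr' fun t => and_imp (a := 0 < Δ * |t|)]
  have hT : 0 < Δ * |π / (2 * Δ)| ∧ Δ * |π / (2 * Δ)| ≤ π / 2 := by
    rw [abs_of_pos (by positivity)]
    field_simp
    exact ⟨by linarith [pi_pos], le_rfl⟩
  refine xor_forall_gt_forall_eq_of_rigid ⟨_, hT⟩ (fun t ⟨ht0, ht⟩ => ?_)
    (fun t ⟨ht0, ht⟩ heq t' => ?_)
  · have := pow_le_pow_left₀ (hcos_nonneg t ht) (cos_le_sum_mul_cos hp hp1 hV ht0 ht) 2
    nlinarith [sq_nonneg (∑ i, p i * Real.sin (ω i * t))]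
  · have hcos := cos_le_sum_mul_cos hp hp1 hV ht0 ht
    have hcos0 := hcos_nonneg t ht
    have hCeq : ∑ i, p i * Real.cos (ω i * t) = Real.cos (Δ * t) := by
      nlinarith [sq_nonneg (∑ i, p i * Real.sin (ω i * t))]
    have hsupp := fun i => abs_eq_of_sum_mul_cos_eq (i := i) hp hp1 hV ht0 ht hCeq
    rw [sum_mul_cos_eq_of_abs_eq hp1 hsupp, sum_mul_sin_eq_zero_of_abs_eq hω0 hΔ.ne' hsupp]
    ring

end WeightedSums

theorem timeEv_apply_of_apply_eq_smul {h : H →L[ℂ] H} {v : H} {c : ℂ} (hv : h v = c • v)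
    (t : ℝ) : timeEv h t v = Complex.exp (-(I * t) * c) • v := by
  set A := (-(I * (t : ℂ))) • h
  have hApow : ∀ n : ℕ, (A ^ n) v = (-(I * t) * c) ^ n • v := by
    intro n
    induction n with
    | zero => simp
    | succ n ih =>
      rw [pow_succ', mul_apply_eq_comp, ih, map_smul, smul_apply, hv, smul_smul, smul_smul]
      congr 1
      ring
  have hseries := (NormedSpace.exp_series_hasSum_exp' (𝕂 := ℂ) A).mapL
    (ContinuousLinearMap.apply ℂ H v)
  rw [Complex.exp_eq_exp_ℂ]
  refine hseries.unique ?_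
  simpa [hApow, smul_smul] using
    (NormedSpace.exp_series_hasSum_exp' (𝕂 := ℂ) (-(I * t) * c)).smul_const v

theorem OrthonormalBasis.inner_apply_self_eq_sum {E ι : Type*} [NormedAddCommGroup E]
    [InnerProductSpace ℂ E] [Fintype ι] (b : OrthonormalBasis ι ℂ E) {T : E →L[ℂ] E}
    {c : ι → ℂ} (hT : ∀ i, T (b i) = c i • b i) (φ : E) :
    ⟪φ, T φ⟫_ℂ = ∑ i, ((‖⟪b i, φ⟫_ℂ‖ ^ 2 : ℝ) : ℂ) * c i := by
  conv_lhs => rw [← b.sum_repr' φ]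
  simp only [map_sum, map_smul, hT, inner_sum, inner_smul_right]
  refine Finset.sum_congr rfl fun i _ => ?_
  rw [b.sum_repr' φ, ← inner_conj_symm φ (b i), mul_left_comm, Complex.mul_conj',
    Complex.ofReal_pow, mul_comm]

theorem norm_sum_mul_exp_sq {ι : Type*} [Fintype ι] (p E : ι → ℝ) (μ t : ℝ) :
    ‖∑ i, (p i : ℂ) * Complex.exp (-(I * t) * E i)‖ ^ 2 =
      (∑ i, p i * Real.cos ((E i - μ) * t)) ^ 2 + (∑ i, p i * Real.sin ((E i - μ) * t)) ^ 2 := by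
  have hsplit : ∑ i, (p i : ℂ) * Complex.exp (-(I * t) * E i) =
      Complex.exp (↑(-(μ * t)) * I) * ∑ i, (p i : ℂ) * Complex.exp (↑(-((E i - μ) * t)) * I) := by
    rw [Finset.mul_sum]
    refine Finset.sum_congr rfl fun i _ => ?_
    rw [mul_left_comm, ← Complex.exp_add]
    push_cast
    ring_nf
  rw [hsplit, norm_mul, Complex.norm_exp_ofReal_mul_I, one_mul, Complex.sq_norm,
    Complex.normSq_apply, Complex.re_sum, Complex.im_sum]
  simp only [Complex.re_ofReal_mul, Complex.im_ofReal_mul, Complex.exp_ofReal_mul_I_re,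
    Complex.exp_ofReal_mul_I_im, Real.cos_neg, Real.sin_neg, mul_neg, Finset.sum_neg_distrib]
  ring

theorem exists_weights_survP_eq {h : H →L[ℂ] H} (hsa : IsSelfAdjoint h) {φ : H} (hφ : ‖φ‖ = 1) :
    ∃ (n : ℕ) (p ω : Fin n → ℝ), (∀ i, 0 ≤ p i) ∧ ∑ i, p i = 1 ∧ ∑ i, p i * ω i = 0 ∧
      ∑ i, p i * ω i ^ 2 = varVec h φ ∧
      ∀ t, survP h φ t =
        (∑ i, p i * Real.cos (ω i * t)) ^ 2 + (∑ i, p i * Real.sin (ω i * t)) ^ 2 := by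
  have hsym : (h : H →ₗ[ℂ] H).IsSymmetric := hsa.isSymmetric
  set b := hsym.eigenvectorBasis rfl
  set E := hsym.eigenvalues rfl
  have hb : ∀ i, h (b i) = (E i : ℂ) • b i := hsym.apply_eigenvectorBasis rfl
  set p : Fin _ → ℝ := fun i => ‖⟪b i, φ⟫_ℂ‖ ^ 2
  set μ := ∑ i, p i * E i
  have hp1 : ∑ i, p i = 1 := by simp [p, b.sum_sq_norm_inner_right, hφ]
  have hmean : expVec h φ = μ := by
    rw [expVec, b.inner_apply_self_eq_sum hb φ]
    simp only [← Complex.ofReal_mul, ← Complex.ofReal_sum, Complex.ofReal_re]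
    rfl
  have hsecond : (⟪φ, h (h φ)⟫_ℂ).re = ∑ i, p i * E i ^ 2 := by
    have hb2 : ∀ i, (h ∘L h) (b i) = ((E i ^ 2 : ℝ) : ℂ) • b i := fun i => by
      rw [ContinuousLinearMap.comp_apply, hb, map_smul, hb, smul_smul]
      push_cast
      ring_nf
    rw [← ContinuousLinearMap.comp_apply (g := h), b.inner_apply_self_eq_sum hb2 φ]
    simp only [← Complex.ofReal_mul, ← Complex.ofReal_sum, Complex.ofReal_re]
    rfl
  refine ⟨_, p, fun i => E i - μ, fun i => by positivity, hp1, ?_, ?_, fun t => ?_⟩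
  · simp only [mul_sub, Finset.sum_sub_distrib, ← Finset.sum_mul, hp1, one_mul, μ, sub_self]
  · have hexpand : ∀ i, p i * (E i - μ) ^ 2 = p i * E i ^ 2 - 2 * μ * (p i * E i) + μ ^ 2 * p i :=
      fun i => by ring
    simp only [hexpand, Finset.sum_add_distrib, Finset.sum_sub_distrib, ← Finset.mul_sum, hp1,
      varVec, hmean, hsecond]
    ring
  · rw [survP, b.inner_apply_self_eq_sum (fun i => timeEv_apply_of_apply_eq_smul (hb i) t) φ]
    exact norm_sum_mul_exp_sq p E μ t

theorem stmt12 (h : H →L[ℂ] H) (hsa : IsSelfAdjoint h) (φ : H) (hφ : ‖φ‖ = 1)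
    (hΔ : 0 < Real.sqrt (varVec h φ)) :
    Xor'
      (∀ t : ℝ, 0 < Real.sqrt (varVec h φ) * |t| → Real.sqrt (varVec h φ) * |t| ≤ Real.pi / 2 →
        survP h φ t > Real.cos (Real.sqrt (varVec h φ) * t) ^ 2)
      (∀ t : ℝ, survP h φ t = Real.cos (Real.sqrt (varVec h φ) * t) ^ 2) := by
  obtain ⟨n, p, ω, hp, hp1, hω0, hV, hsurv⟩ := exists_weights_survP_eq hsa hφ
  have hΔsq : Real.sqrt (varVec h φ) ^ 2 = varVec h φ := Real.sq_sqrt (Real.sqrt_pos.mp hΔ).le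
  simp only [hsurv]
  exact xor_sum_sq_gt_cos_sq_or_eq hp hp1 hω0 (hV.trans hΔsq.symm) hΔ
end
end

section
/- Let ρ = Σₖ λₖ |ψₖ⟩⟨ψₖ| be a density operator (ψₖ orthonormal, λₖ > 0), Π the projection onto the range of ρ, h self-adjoint, and P_ρ(t) = Tr(Π e^{−iht} ρ e^{iht}). Then the second derivative of P_ρ at t = 0 satisfies −P″_ρ(0)/2 = Σₖ λₖ (Δh)²_{ψₖ} − Σ_{k≠l} λₗ |⟨ψₖ, hψₗ⟩|². -/
open scoped InnerProductSpace
open Complex Filter Asymptotics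

noncomputable section

variable {H : Type*} [NormedAddCommGroup H] [InnerProductSpace ℂ H] [FiniteDimensional ℂ H]

/-! Expanding `Π` and `ρ` gives `P_ρ(t) = ∑ₖ ∑ₗ λₗ ‖gₖₗ(t)‖²` with `gₖₗ(t) = ⟪ψₖ, e^{-iht} ψₗ⟫`.
For a curve `g` in a real inner product space, `(‖g‖²)'' = 2 (⟪g, g''⟫ + ‖g'‖²)`; at `t = 0`
we have `gₖₗ = δₖₗ`, `gₖₗ' = -i ⟪ψₖ, h ψₗ⟫` and `gₖₗ'' = -⟪ψₖ, h² ψₗ⟫`. Since `⟪ψ, h ψ⟫` is real,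
the diagonal terms give the variances and the off-diagonal ones the transition terms. -/

section NormSqCalculus

variable {F : Type*} [NormedAddCommGroup F] [InnerProductSpace ℝ F]

theorem deriv_deriv_sum_mul_norm_sq {ι : Type*} [Fintype ι] (c : ι → ℝ)
    {g g' : ι → ℝ → F} {g'' : ι → F} {x : ℝ}
    (hg : ∀ i t, HasDerivAt (g i) (g' i t) t) (hg' : ∀ i, HasDerivAt (g' i) (g'' i) x) :
    deriv (deriv fun t => ∑ i, c i * ‖g i t‖ ^ 2) x
      = ∑ i, c i * (2 * (⟪g i x, g'' i⟫_ℝ + ‖g' i x‖ ^ 2)) := by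
  have hfirst : deriv (fun t => ∑ i, c i * ‖g i t‖ ^ 2)
      = fun t => ∑ i, c i * (2 * ⟪g i t, g' i t⟫_ℝ) :=
    funext fun t => (HasDerivAt.fun_sum fun i _ => (hg i t).norm_sq.const_mul (c i)).deriv
  rw [hfirst]
  have hsecond := HasDerivAt.fun_sum (u := Finset.univ) fun i _ =>
    (((hg i x).inner ℝ (hg' i)).const_mul 2).const_mul (c i)
  rw [hsecond.deriv]
  simp only [real_inner_self_eq_norm_sq]

end NormSqCalculus

section KetBra

variable {E : Type*} [NormedAddCommGroup E] [InnerProductSpace ℂ E]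

theorem tr_sum {ι : Type*} (s : Finset ι) (A : ι → E →L[ℂ] E) :
    tr (∑ i ∈ s, A i) = ∑ i ∈ s, tr (A i) := by
  simp only [tr, ContinuousLinearMap.toLinearMap_sum, map_sum]

theorem tr_smul (c : ℂ) (A : E →L[ℂ] E) : tr (c • A) = c * tr A := by
  simp only [tr, ContinuousLinearMap.toLinearMap_smul, map_smul, smul_eq_mul]

theorem tr_ketbra [FiniteDimensional ℂ E] (φ ψ : E) : tr (ketbra φ ψ) = ⟪ψ, φ⟫_ℂ := by
  have : (ketbra φ ψ).toLinearMap = dualTensorHom ℂ E E ((innerₛₗ ℂ ψ) ⊗ₜ φ) := by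
    ext x; simp [ketbra]
  rw [tr, this, LinearMap.trace_eq_contract_apply, contractLeft_apply]
  rfl

theorem comp_ketbra (A : E →L[ℂ] E) (φ ψ : E) : A ∘L ketbra φ ψ = ketbra (A φ) ψ := by
  ext x; simp [ketbra]

theorem tr_ketbra_comp [FiniteDimensional ℂ E] (φ ψ : E) (A : E →L[ℂ] E) :
    tr (ketbra φ ψ ∘L A) = ⟪ψ, A φ⟫_ℂ := by
  rw [tr, ContinuousLinearMap.toLinearMap_comp, LinearMap.trace_comp_comm',
    ← ContinuousLinearMap.toLinearMap_comp, comp_ketbra]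
  exact tr_ketbra _ _

theorem tr_ketbra_comp_ketbra_comp_adjoint [FiniteDimensional ℂ E] (φ ψ : E) (U : E →L[ℂ] E) :
    tr (ketbra φ φ ∘L U ∘L ketbra ψ ψ ∘L U.adjoint) = (‖⟪φ, U ψ⟫_ℂ‖ ^ 2 : ℝ) := by
  rw [tr_ketbra_comp]
  simp only [ketbra, ContinuousLinearMap.comp_apply, ContinuousLinearMap.smulRight_apply,
    innerSL_apply_apply, map_smul, inner_smul_right, ContinuousLinearMap.adjoint_inner_right]
  rw [← inner_conj_symm, mul_comm, Complex.mul_conj']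
  norm_cast

theorem tr_sum_ketbra_comp_conj_sum_smul_ketbra [FiniteDimensional ℂ E] {n : ℕ}
    (ψ : Fin n → E) (lam : Fin n → ℝ) (U : E →L[ℂ] E) :
    tr ((∑ k, ketbra (ψ k) (ψ k)) ∘L U ∘L (∑ l, (lam l : ℂ) • ketbra (ψ l) (ψ l)) ∘L U.adjoint)
      = ∑ k, ∑ l, ((lam l * ‖⟪ψ k, U (ψ l)⟫_ℂ‖ ^ 2 : ℝ) : ℂ) := by
  simp only [ContinuousLinearMap.finsetSum_comp, ContinuousLinearMap.comp_finsetSum,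
    ContinuousLinearMap.smul_comp, ContinuousLinearMap.comp_smul, tr_sum, tr_smul,
    tr_ketbra_comp_ketbra_comp_adjoint, Complex.ofReal_mul, Finset.mul_sum]
  exact Finset.sum_comm

end KetBra

theorem timeEv_eq_exp_smul (h : H →L[ℂ] H) (t : ℝ) :
    timeEv h t = NormedSpace.exp (t • (-I) • h) := by
  rw [timeEv, ← smul_assoc, Complex.real_smul]
  congr 2
  ring

theorem timeEv_zero (h : H →L[ℂ] H) : timeEv h 0 = 1 := by
  simp [timeEv]

theorem adjoint_timeEv {h : H →L[ℂ] H} (hsa : IsSelfAdjoint h) (t : ℝ) :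
    (timeEv h t).adjoint = timeEv h (-t) := by
  rw [← ContinuousLinearMap.star_eq_adjoint, timeEv, timeEv, NormedSpace.star_exp, star_smul,
    hsa.star_eq]
  simp

theorem hasDerivAt_inner_timeEv (h : H →L[ℂ] H) (x y : H) (t : ℝ) :
    HasDerivAt (fun s => ⟪x, timeEv h s y⟫_ℂ) (-I * ⟪x, timeEv h t (h y)⟫_ℂ) t := by
  have hexp := hasDerivAt_exp_smul_const (𝕂 := ℝ) ((-I) • h) t
  have hcoef := (((innerSL ℂ x).comp (ContinuousLinearMap.apply ℂ H y)).restrictScalars ℝ)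
    |>.hasFDerivAt.comp_hasDerivAt t hexp
  simp only [timeEv_eq_exp_smul]
  refine (hcoef : HasDerivAt (fun s => ⟪x, NormedSpace.exp (s • (-I) • h) y⟫_ℂ) _ t).congr_deriv ?_
  simp [inner_smul_right]

theorem survPMix_eq_sum {n : ℕ} {h : H →L[ℂ] H} (hsa : IsSelfAdjoint h) (ψ : Fin n → H)
    (lam : Fin n → ℝ) (t : ℝ) :
    survPMix h (∑ k, (lam k : ℂ) • ketbra (ψ k) (ψ k)) (∑ k, ketbra (ψ k) (ψ k)) t
      = ∑ k, ∑ l, lam l * ‖⟪ψ k, timeEv h t (ψ l)⟫_ℂ‖ ^ 2 := by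
  rw [survPMix, ← adjoint_timeEv hsa, tr_sum_ketbra_comp_conj_sum_smul_ketbra]
  simp only [Complex.re_sum, Complex.ofReal_re]

theorem norm_inner_apply_self_sq {h : H →L[ℂ] H} (hsa : IsSelfAdjoint h) (x : H) :
    ‖⟪x, h x⟫_ℂ‖ ^ 2 = (⟪x, h x⟫_ℂ).re ^ 2 := by
  have him : (⟪x, h x⟫_ℂ).im = 0 := hsa.isSymmetric.im_inner_self_apply x
  rw [Complex.sq_norm, Complex.normSq_apply, him]
  ring

theorem re_inner_inner_add_norm_inner_sq {n : ℕ} {h : H →L[ℂ] H} (hsa : IsSelfAdjoint h)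
    {ψ : Fin n → H} (hon : Orthonormal ℂ ψ) (k l : Fin n) :
    ⟪⟪ψ k, ψ l⟫_ℂ, -⟪ψ k, h (h (ψ l))⟫_ℂ⟫_ℝ + ‖⟪ψ k, h (ψ l)⟫_ℂ‖ ^ 2
      = if k = l then -varVec h (ψ l) else ‖⟪ψ k, h (ψ l)⟫_ℂ‖ ^ 2 := by
  rw [orthonormal_iff_ite.mp hon, Complex.inner]
  split_ifs with hkl
  · subst hkl
    rw [varVec, expVec, norm_inner_apply_self_sq hsa, map_one, mul_one, Complex.neg_re]
    ring
  · rw [map_zero, mul_zero, Complex.zero_re, zero_add]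

theorem stmt15_general {n : ℕ} (h ρ : H →L[ℂ] H) (hsa : IsSelfAdjoint h)
    (ψ : Fin n → H) (hon : Orthonormal ℂ ψ)
    (lam : Fin n → ℝ)
    (hρ : ρ = ∑ k, (lam k : ℂ) • ketbra (ψ k) (ψ k))
    (Pr : H →L[ℂ] H) (hPr : Pr = ∑ k, ketbra (ψ k) (ψ k)) :
    -(deriv (deriv (survPMix h ρ Pr)) 0) / 2
      = ∑ k, lam k * varVec h (ψ k)
        - ∑ k, ∑ l, (if k = l then 0 else lam l * ‖⟪ψ k, h (ψ l)⟫_ℂ‖ ^ 2) := by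
  subst hρ hPr
  have hP : survPMix h _ _ = fun t => ∑ p : Fin n × Fin n,
      lam p.2 * ‖⟪ψ p.1, timeEv h t (ψ p.2)⟫_ℂ‖ ^ 2 :=
    funext fun t => by rw [survPMix_eq_sum hsa ψ lam, Fintype.sum_prod_type]
  have hg' (p : Fin n × Fin n) : HasDerivAt (fun t => -I * ⟪ψ p.1, timeEv h t (h (ψ p.2))⟫_ℂ)
      (-⟪ψ p.1, h (h (ψ p.2))⟫_ℂ) 0 := by
    simpa [timeEv_zero, ← mul_assoc] using
      (hasDerivAt_inner_timeEv h (ψ p.1) (h (ψ p.2)) 0).const_mul (-I)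
  rw [hP, deriv_deriv_sum_mul_norm_sq _ (fun p t => hasDerivAt_inner_timeEv h _ _ t) hg',
    Fintype.sum_prod_type]
  simp only [timeEv_zero, one_apply_eq_self, norm_mul, norm_neg, Complex.norm_I,
    one_mul, re_inner_inner_add_norm_inner_sq hsa hon]
  rw [eq_sub_iff_add_eq, neg_div, Finset.sum_div, ← Finset.sum_neg_distrib,
    ← Finset.sum_add_distrib]
  refine Finset.sum_congr rfl fun k _ => ?_
  rw [Finset.sum_div, ← Finset.sum_neg_distrib, ← Finset.sum_add_distrib,
    ← Fintype.sum_ite_eq k fun l => lam l * varVec h (ψ l)]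
  refine Finset.sum_congr rfl fun l _ => ?_
  split_ifs <;> ring

theorem stmt15 {n : ℕ} (h ρ : H →L[ℂ] H) (hsa : IsSelfAdjoint h)
    (ψ : Fin n → H) (hon : Orthonormal ℂ ψ)
    (lam : Fin n → ℝ) (hpos : ∀ k, 0 < lam k) (hsum : ∑ k, lam k = 1)
    (hρ : ρ = ∑ k, (lam k : ℂ) • ketbra (ψ k) (ψ k))
    (Pr : H →L[ℂ] H) (hPr : Pr = ∑ k, ketbra (ψ k) (ψ k)) :
    -(deriv (deriv (survPMix h ρ Pr)) 0) / 2
      = ∑ k, lam k * varVec h (ψ k)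
        - ∑ k, ∑ l, (if k = l then 0 else lam l * ‖⟪ψ k, h (ψ l)⟫_ℂ‖ ^ 2) :=
  stmt15_general h ρ hsa ψ hon lam hρ Pr hPr
end
end
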